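/- arXiv:2402.09568 — 2 statements merged into one kernel-verified Lean document; each statement's English description precedes it below -/
import Mathlib

section
/- Let n be a positive integer and K a field. There exists a monomial order ≻ on the polynomial ring K[x_e : e ∈ P] (depending only on n) such that for every positive integer k and every non-decreasing k-coloring z of {1,…,n}, the set {x^{γ⁺} − x^{γ⁻} : γ ∈ M_{n,z}} is a Gröbner basis for the toric ideal I_{DC_{n,z}} with respect to ≻; that is, for every nonzero f ∈ I_{DC_{n,z}}, the leading monomial in_≻(f) is divisible by in_≻(x^{γ⁺} − x^{γ⁻}) for some γ ∈ M_{n,z}. -/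
open Finset

/-- The set `P` of 2-element subsets of `{1,…,n}`, encoded as ordered pairs. -/
abbrev Edge (n : ℕ) : Type := {p : Fin n × Fin n // p.1 < p.2}

/-- Entry `γ_{uv}` of a vector `γ ∈ ℤ^P` at the unordered pair `{u,v}` (0 when `u = v`). -/
def ent {n : ℕ} (γ : Edge n → ℤ) (u v : Fin n) : ℤ :=
  if h : u < v then γ ⟨(u, v), h⟩ else if h : v < u then γ ⟨(v, u), h⟩ else 0

/-- Entry at `{u,v}` of a vector in `ℕ^P`. -/
def entN {n : ℕ} (x : Edge n → ℕ) (u v : Fin n) : ℕ :=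
  if h : u < v then x ⟨(u, v), h⟩ else if h : v < u then x ⟨(v, u), h⟩ else 0

/-- Degree sequence: `d(γ)_u = ∑_{v ≠ u} γ_{uv}`. -/
def degSeq {n : ℕ} (γ : Edge n → ℤ) (u : Fin n) : ℤ := ∑ v, ent γ u v

/-- Color sequence: `c(γ)_{ij} = ∑ γ_{uv}` over `{u,v} ∈ P` with `{z u, z v} = {i,j}`. -/
def colorSeq {n k : ℕ} (z : Fin n → Fin k) (γ : Edge n → ℤ) (i j : Fin k) : ℤ :=
  ∑ e : Edge n,
    if (z e.1.1 = i ∧ z e.1.2 = j) ∨ (z e.1.1 = j ∧ z e.1.2 = i) then γ e else 0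

/-- `γ ∈ ker_ℤ DC_{n,z}`: both the degree sequence and the color sequence vanish. -/
def inKer {n k : ℕ} (z : Fin n → Fin k) (γ : Edge n → ℤ) : Prop :=
  (∀ u, degSeq γ u = 0) ∧ ∀ i j, colorSeq z γ i j = 0

/-- The 1-norm `‖γ‖₁ = ∑_{e ∈ P} |γ_e|`. -/
def norm1 {n : ℕ} (γ : Edge n → ℤ) : ℤ := ∑ e, |γ e|

/-- The set of moves `M_{n,z} = {γ ∈ ker_ℤ DC_{n,z} : ‖γ‖₁ = 4}`. -/
def MSet {n k : ℕ} (z : Fin n → Fin k) : Set (Edge n → ℤ) :=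
  {γ | inKer z γ ∧ norm1 γ = 4}

/-- Degree sequence of a vector in `ℕ^P`. -/
def degSeqN {n : ℕ} (x : Edge n → ℕ) (u : Fin n) : ℕ := ∑ v, entN x u v

/-- Color sequence of a vector in `ℕ^P`. -/
def colorSeqN {n k : ℕ} (z : Fin n → Fin k) (x : Edge n → ℕ) (i j : Fin k) : ℕ :=
  ∑ e : Edge n,
    if (z e.1.1 = i ∧ z e.1.2 = j) ∨ (z e.1.1 = j ∧ z e.1.2 = i) then x e else 0

/-- The fiber `F(b) = {x ∈ ℕ^P : DC_{n,z} x = b}`, where `b = (d; c)`. -/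
def Fiber {n k : ℕ} (z : Fin n → Fin k) (d : Fin n → ℤ) (c : Fin k → Fin k → ℤ) :
    Set (Edge n → ℕ) :=
  {x | (∀ u, (degSeqN x u : ℤ) = d u) ∧ ∀ i j, (colorSeqN z x i j : ℤ) = c i j}

/-- The simple fiber `F̃(b) = F(b) ∩ {0,1}^P`. -/
def SimpleFiber {n k : ℕ} (z : Fin n → Fin k) (d : Fin n → ℤ) (c : Fin k → Fin k → ℤ) :
    Set (Edge n → ℕ) :=
  {x | x ∈ Fiber z d c ∧ ∀ e, x e ≤ 1}

/-- The difference `x − x' ∈ ℤ^P` of two vectors in `ℕ^P`. -/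
def diff {n : ℕ} (x x' : Edge n → ℕ) : Edge n → ℤ := fun e => (x e : ℤ) - (x' e : ℤ)

/-- The monomial map `φ_β : x_{uv} ↦ s_u s_v t_{z(u)z(v)}` defining the toric ideal. -/
noncomputable def phiBeta (K : Type*) [Field K] {n k : ℕ} (z : Fin n → Fin k) :
    MvPolynomial (Edge n) K →ₐ[K] MvPolynomial (Fin n ⊕ Fin k × Fin k) K :=
  MvPolynomial.aeval fun e =>
    MvPolynomial.X (Sum.inl e.1.1) * MvPolynomial.X (Sum.inl e.1.2) *
      MvPolynomial.X (Sum.inr (min (z e.1.1) (z e.1.2), max (z e.1.1) (z e.1.2)))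

/-- The exponent vector `γ⁺ = max(γ, 0)`. -/
noncomputable def expPos {n : ℕ} (γ : Edge n → ℤ) : Edge n →₀ ℕ :=
  Finsupp.equivFunOnFinite.symm fun e => (γ e).toNat

/-- The exponent vector `γ⁻ = max(−γ, 0)`. -/
noncomputable def expNeg {n : ℕ} (γ : Edge n → ℤ) : Edge n →₀ ℕ :=
  Finsupp.equivFunOnFinite.symm fun e => (-γ e).toNat

/-- The binomial `x^{γ⁺} − x^{γ⁻}` associated to `γ ∈ ℤ^P`. -/
noncomputable def binom (K : Type*) [Field K] {n : ℕ} (γ : Edge n → ℤ) :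
    MvPolynomial (Edge n) K :=
  MvPolynomial.monomial (expPos γ) (1 : K) - MvPolynomial.monomial (expNeg γ) (1 : K)

/-- The variable `x_{ab}` for an unordered pair `{a,b}` with `a ≠ b`. -/
noncomputable def edgeVar (K : Type*) [Field K] {n : ℕ} (a b : Fin n) :
    MvPolynomial (Edge n) K :=
  if h : a < b then MvPolynomial.X ⟨(a, b), h⟩
  else if h : b < a then MvPolynomial.X ⟨(b, a), h⟩ else 1

/-- `α` is the leading exponent (leading monomial) of `f` with respect to the strict
order `r` (where `r β α` means `β ≺ α`). -/
def IsLeading {n : ℕ} {K : Type*} [CommSemiring K]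
    (r : (Edge n →₀ ℕ) → (Edge n →₀ ℕ) → Prop)
    (f : MvPolynomial (Edge n) K) (α : Edge n →₀ ℕ) : Prop :=
  α ∈ f.support ∧ ∀ β ∈ f.support, β ≠ α → r β α

open MvPolynomial MonomialOrder

/-!
Order the edges by their larger endpoint, ties broken by the larger smaller endpoint, and take
the lexicographic order on exponents in which earlier edges weigh more. Two monomials have the
same image under `φ_β` exactly when they lie in the same fiber of `DC_{n,z}`, so it suffices to
show that a monomial that is not the least one of its fiber is divisible by the leading term of a
quadratic move. This follows once two monomials of a fiber neither of which admits such a move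
are shown to be equal. Cancelling common edges, they may be assumed disjoint; at the first edge
`{u,v}` of their union, degree and colour counts in the fiber produce either a nested pair
`{a,d}, {b,c}` with `z a = z b` or `z c = z d`, or a separated pair `{a,b}, {c,d}` with
`z b = z c` (`a < b < c < d`), and replacing either pair by `{a,c}, {b,d}` lowers the monomial.
-/

namespace Edge

variable {n : ℕ}

def key (e : Edge n) : Fin n ×ₗ (Fin n)ᵒᵈ := toLex (e.1.2, OrderDual.toDual e.1.1)

lemma key_injective : Function.Injective (key (n := n)) := by
  intro e f h
  simp only [key, toLex_inj, Prod.mk.injEq, OrderDual.toDual_inj] at h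
  exact Subtype.ext (Prod.ext h.2 h.1)

lemma key_le_key {e f : Edge n} :
    e.key ≤ f.key ↔ e.1.2 < f.1.2 ∨ e.1.2 = f.1.2 ∧ f.1.1 ≤ e.1.1 := by
  simp [key, Prod.Lex.toLex_le_toLex]

lemma key_lt_key {e f : Edge n} :
    e.key < f.key ↔ e.1.2 < f.1.2 ∨ e.1.2 = f.1.2 ∧ f.1.1 < e.1.1 := by
  simp [key, Prod.Lex.toLex_lt_toLex]

end Edge

noncomputable def edgeOrder (n : ℕ) : MonomialOrder (Edge n) :=
  let ord : LinearOrder (Edge n) := LinearOrder.lift' Edge.key Edge.key_injective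
  @MonomialOrder.lex _ ord (@Finite.to_wellFoundedGT _ _ ord.toPreorder)

lemma edgeOrder_lt_iff {n : ℕ} {a b : Edge n →₀ ℕ} :
    a ≺[edgeOrder n] b ↔ ∃ e, (∀ d, d.key < e.key → a d = b d) ∧ a e < b e :=
  Iff.rfl

lemma isLeading_degree {n : ℕ} {K : Type*} [CommSemiring K] (m : MonomialOrder (Edge n))
    {f : MvPolynomial (Edge n) K} (hf : f ≠ 0) :
    IsLeading (fun a b => a ≺[m] b) f (m.degree f) :=
  ⟨m.degree_mem_support hf, fun _ hβ hne => (m.le_degree hβ).lt_of_ne (m.toSyn.injective.ne hne)⟩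

lemma isLeading_binom {n : ℕ} (K : Type*) [Field K] (m : MonomialOrder (Edge n))
    {γ : Edge n → ℤ} (h : expNeg γ ≺[m] expPos γ) :
    IsLeading (fun a b => a ≺[m] b) (binom K γ) (expPos γ) := by
  have hne : expNeg γ ≠ expPos γ := fun h' => (h' ▸ h).false
  refine ⟨?_, fun β hβ hβne => ?_⟩
  · simp [binom, coeff_monomial, hne]
  · rw [mem_support_iff, binom, coeff_sub, coeff_monomial, coeff_monomial,
      if_neg (Ne.symm hβne)] at hβ
    obtain rfl : expNeg γ = β := by
      by_contra h'
      simp [h'] at hβ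
    exact h

lemma eq_and_eq_or_eq_and_eq_iff_minmax {α : Type*} [LinearOrder α] {a b i j : α} :
    (a = i ∧ b = j ∨ a = j ∧ b = i) ↔ (min a b, max a b) = (min i j, max i j) := by
  rw [Prod.mk.injEq]
  grind

section

variable {n k : ℕ}

noncomputable def edgeExp (z : Fin n → Fin k) (e : Edge n) : Fin n ⊕ Fin k × Fin k →₀ ℕ :=
  Finsupp.single (.inl e.1.1) 1 + Finsupp.single (.inl e.1.2) 1 +
    Finsupp.single (.inr (min (z e.1.1) (z e.1.2), max (z e.1.1) (z e.1.2))) 1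

noncomputable def phiBetaExp (z : Fin n → Fin k) :
    (Edge n →₀ ℕ) →ₗ[ℕ] (Fin n ⊕ Fin k × Fin k →₀ ℕ) :=
  Finsupp.linearCombination ℕ (edgeExp z)

lemma phiBeta_monomial (K : Type*) [Field K] (z : Fin n → Fin k) (α : Edge n →₀ ℕ) (c : K) :
    phiBeta K z (monomial α c) = monomial (phiBetaExp z α) c := by
  have hX : ∀ e : Edge n, (X (.inl e.1.1) * X (.inl e.1.2) *
      X (.inr (min (z e.1.1) (z e.1.2), max (z e.1.1) (z e.1.2))) :
        MvPolynomial (Fin n ⊕ Fin k × Fin k) K) = monomial (edgeExp z e) 1 := by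
    intro e
    simp only [X, monomial_mul, mul_one, edgeExp]
  simp only [phiBeta, aeval_monomial, hX, monomial_pow, one_pow, phiBetaExp,
    Finsupp.linearCombination_apply, monomial_finsupp_sum_index, algebraMap_eq]

lemma phiBetaExp_single (z : Fin n → Fin k) (e : Edge n) :
    phiBetaExp z (Finsupp.single e 1) = edgeExp z e := by
  simp [phiBetaExp]

lemma phiBetaExp_apply (z : Fin n → Fin k) (α : Edge n →₀ ℕ) (i : Fin n ⊕ Fin k × Fin k) :
    phiBetaExp z α i = ∑ e, α e * edgeExp z e i := by
  simp [phiBetaExp, Finsupp.linearCombination_apply, Finsupp.sum_fintype, Finsupp.finsetSum_apply]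

lemma edgeExp_inl (z : Fin n → Fin k) (e : Edge n) (m : Fin n) :
    edgeExp z e (.inl m) = (if e.1.1 = m then 1 else 0) + (if e.1.2 = m then 1 else 0) := by
  simp [edgeExp, Finsupp.single_apply]

lemma edgeExp_inr (z : Fin n → Fin k) (e : Edge n) (ij : Fin k × Fin k) :
    edgeExp z e (.inr ij) =
      if (min (z e.1.1) (z e.1.2), max (z e.1.1) (z e.1.2)) = ij then 1 else 0 := by
  simp [edgeExp, Finsupp.single_apply]

lemma sum_edge_eq_sum_pairs {M : Type*} [AddCommMonoid M] (F : Edge n → M) :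
    ∑ e, F e = ∑ p : Fin n × Fin n, if h : p.1 < p.2 then F ⟨p, h⟩ else 0 := by
  rw [Finset.sum_dite]
  simp only [Finset.sum_const_zero, add_zero]
  exact ((Equiv.subtypeEquivRight (by simp)).sum_comp (fun e : Edge n => F e)).symm

lemma degSeqN_eq_phiBetaExp (z : Fin n → Fin k) (x : Edge n →₀ ℕ) (m : Fin n) :
    degSeqN x m = phiBetaExp z x (.inl m) := by
  let y (p : Fin n × Fin n) : ℕ := if h : p.1 < p.2 then x ⟨p, h⟩ else 0
  have hent : ∀ v, entN x m v = y (m, v) + y (v, m) := by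
    intro v
    simp only [entN, y]
    split_ifs with h₁ h₂ h₂ <;> first | exact absurd h₁ (lt_asymm h₂) | simp
  calc degSeqN x m = ∑ v, y (m, v) + ∑ u, y (u, m) := by
        simp only [degSeqN, hent, Finset.sum_add_distrib]
    _ = ∑ p : Fin n × Fin n, y p * ((if p.1 = m then 1 else 0) + (if p.2 = m then 1 else 0)) := by
        simp [Fintype.sum_prod_type, mul_add, Finset.sum_add_distrib, Finset.sum_comm (γ := Fin n)]
    _ = phiBetaExp z x (.inl m) := by
        rw [phiBetaExp_apply, sum_edge_eq_sum_pairs]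
        refine Fintype.sum_congr _ _ fun p => ?_
        by_cases h : p.1 < p.2 <;> simp [y, h, edgeExp_inl]

lemma colorSeqN_eq_phiBetaExp (z : Fin n → Fin k) (x : Edge n →₀ ℕ) (i j : Fin k) :
    colorSeqN z x i j = phiBetaExp z x (.inr (min i j, max i j)) := by
  rw [phiBetaExp_apply, colorSeqN]
  refine Finset.sum_congr rfl fun e _ => ?_
  rw [edgeExp_inr, mul_ite, mul_one, mul_zero]
  exact if_congr eq_and_eq_or_eq_and_eq_iff_minmax rfl rfl

lemma degSeq_diff (x y : Edge n → ℕ) (m : Fin n) :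
    degSeq (diff x y) m = degSeqN x m - degSeqN y m := by
  simp only [degSeq, degSeqN, Nat.cast_sum, ← Finset.sum_sub_distrib]
  refine Finset.sum_congr rfl fun v _ => ?_
  simp only [ent, entN, diff]
  split_ifs <;> simp

lemma colorSeq_diff (z : Fin n → Fin k) (x y : Edge n → ℕ) (i j : Fin k) :
    colorSeq z (diff x y) i j = colorSeqN z x i j - colorSeqN z y i j := by
  simp only [colorSeq, colorSeqN, Nat.cast_sum, ← Finset.sum_sub_distrib]
  refine Finset.sum_congr rfl fun e _ => ?_
  simp only [diff]
  split_ifs <;> simp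

lemma phiBetaExp_inr_eq_zero (z : Fin n → Fin k) (x : Edge n →₀ ℕ) {a b : Fin k} (h : b < a) :
    phiBetaExp z x (.inr (a, b)) = 0 := by
  refine (phiBetaExp_apply z x _).trans (Finset.sum_eq_zero fun e _ => ?_)
  rw [edgeExp_inr, if_neg, mul_zero]
  intro he
  rw [Prod.mk.injEq] at he
  exact (h.trans_le (he.1 ▸ he.2 ▸ min_le_max)).false

lemma inKer_diff_iff (z : Fin n → Fin k) (p q : Edge n →₀ ℕ) :
    inKer z (diff p q) ↔ phiBetaExp z p = phiBetaExp z q := by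
  simp only [inKer, degSeq_diff, colorSeq_diff, sub_eq_zero, Nat.cast_inj,
    degSeqN_eq_phiBetaExp z, colorSeqN_eq_phiBetaExp]
  refine ⟨fun ⟨hdeg, hcol⟩ => ?_, fun h => ⟨fun m => by rw [h], fun i j => by rw [h]⟩⟩
  ext (m | ⟨a, b⟩)
  · exact hdeg m
  · rcases le_or_gt a b with h | h
    · simpa [min_eq_left h, max_eq_right h] using hcol a b
    · rw [phiBetaExp_inr_eq_zero z p h, phiBetaExp_inr_eq_zero z q h]

lemma diff_expPos_expNeg (γ : Edge n → ℤ) : diff (expPos γ) (expNeg γ) = γ := by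
  funext e
  simp [diff, expPos, expNeg]

lemma phiBetaExp_expPos {z : Fin n → Fin k} {γ : Edge n → ℤ} (hγ : γ ∈ MSet z) :
    phiBetaExp z (expPos γ) = phiBetaExp z (expNeg γ) :=
  (inKer_diff_iff z _ _).1 ((diff_expPos_expNeg γ).symm ▸ hγ.1)

lemma expPos_diff_expNeg_diff {p q : Edge n →₀ ℕ} (h : ∀ e, p e = 0 ∨ q e = 0) :
    expPos (diff p q) = p ∧ expNeg (diff p q) = q := by
  constructor <;> ext e <;> rcases h e with h | h <;> simp [expPos, expNeg, diff, h]

lemma norm1_diff {p q : Edge n →₀ ℕ} (h : ∀ e, p e = 0 ∨ q e = 0) :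
    norm1 (diff p q) = ∑ e, p e + ∑ e, q e := by
  push_cast
  rw [norm1, ← Finset.sum_add_distrib]
  refine Finset.sum_congr rfl fun e _ => ?_
  rcases h e with h | h <;> simp [diff, h]

variable (z : Fin n → Fin k) in
def HasDecreasingMove (A : Edge n →₀ ℕ) : Prop :=
  ∃ γ ∈ MSet z, expPos γ ≤ A ∧ expNeg γ ≺[edgeOrder n] expPos γ

variable {z : Fin n → Fin k} {A B : Edge n →₀ ℕ}

lemma HasDecreasingMove.mono (h : HasDecreasingMove z A) (hAB : A ≤ B) :
    HasDecreasingMove z B :=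
  let ⟨γ, hγ, hle, hlt⟩ := h
  ⟨γ, hγ, hle.trans hAB, hlt⟩

lemma HasDecreasingMove.exists_lt (h : HasDecreasingMove z A) :
    ∃ A', phiBetaExp z A' = phiBetaExp z A ∧ A' ≺[edgeOrder n] A := by
  obtain ⟨γ, hγ, hle, hlt⟩ := h
  refine ⟨A - expPos γ + expNeg γ, ?_, ?_⟩
  · conv_rhs => rw [← tsub_add_cancel_of_le hle]
    rw [map_add, map_add, phiBetaExp_expPos hγ]
  · conv_rhs => rw [← tsub_add_cancel_of_le hle]
    rw [map_add, map_add]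
    exact add_lt_add_right hlt _

lemma hasDecreasingMove_of_swap {E₁ E₂ F₁ F₂ : Edge n}
    (hexp : edgeExp z E₁ + edgeExp z E₂ = edgeExp z F₁ + edgeExp z F₂)
    (h₂ : E₁.key < E₂.key) (h₃ : E₁.key < F₁.key) (h₄ : E₁.key < F₂.key)
    (h₅ : E₂ ≠ F₁) (h₆ : E₂ ≠ F₂) (hA₁ : 0 < A E₁) (hA₂ : 0 < A E₂) :
    HasDecreasingMove z A := by
  have hne : ∀ {e f : Edge n}, e.key < f.key → e ≠ f := fun h he => (he ▸ h).false
  set p : Edge n →₀ ℕ := Finsupp.single E₁ 1 + Finsupp.single E₂ 1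
  set q : Edge n →₀ ℕ := Finsupp.single F₁ 1 + Finsupp.single F₂ 1
  have hdisj : ∀ e, p e = 0 ∨ q e = 0 := by
    intro e
    by_cases he₁ : E₁ = e
    · subst he₁; simp [p, q, Finsupp.single_apply, hne h₃, hne h₄]
    by_cases he₂ : E₂ = e
    · subst he₂; simp [p, q, Finsupp.single_apply, h₅, h₆]
    simp [p, he₁, he₂]
  obtain ⟨hpos, hneg⟩ := expPos_diff_expNeg_diff hdisj
  refine ⟨diff p q, ⟨(inKer_diff_iff z p q).2 ?_, ?_⟩, ?_, ?_⟩
  · simp [p, q, phiBetaExp_single, hexp]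
  · rw [norm1_diff hdisj]
    simp [p, q, Finset.sum_add_distrib, Finsupp.single_apply]
  · rw [hpos, Finsupp.le_def]
    intro e
    by_cases he₁ : E₁ = e
    · subst he₁; simpa [p, (hne h₂).symm] using Nat.one_le_of_lt hA₁
    by_cases he₂ : E₂ = e
    · subst he₂; simpa [p, he₁] using Nat.one_le_of_lt hA₂
    simp [p, he₁, he₂]
  · rw [hpos, hneg, edgeOrder_lt_iff]
    refine ⟨E₁, fun d hd => ?_, ?_⟩
    · simp [p, q, (hne hd).symm, (hne (hd.trans h₂)).symm,
        (hne (hd.trans h₃)).symm, (hne (hd.trans h₄)).symm]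
    · simp [p, q, hne h₂, hne h₃, hne h₄]

lemma hasDecreasingMove_of_nested {a b c d : Fin n} (hab : a < b) (hbc : b < c) (hcd : c < d)
    (hz : z a = z b ∨ z c = z d) (hA₁ : 0 < A ⟨(a, d), hab.trans (hbc.trans hcd)⟩)
    (hA₂ : 0 < A ⟨(b, c), hbc⟩) : HasDecreasingMove z A := by
  refine hasDecreasingMove_of_swap (E₁ := ⟨(b, c), hbc⟩) (E₂ := ⟨(a, d), _⟩)
    (F₁ := ⟨(a, c), hab.trans hbc⟩) (F₂ := ⟨(b, d), hbc.trans hcd⟩) ?_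
    (Edge.key_lt_key.2 (.inl hcd))
    (Edge.key_lt_key.2 (.inr ⟨rfl, hab⟩)) (Edge.key_lt_key.2 (.inl hcd))
    (by simp [hcd.ne']) (by simp [hab.ne]) hA₂ hA₁
  rcases hz with hz | hz <;> simp only [edgeExp, hz] <;> abel

lemma hasDecreasingMove_of_separated {a b c d : Fin n} (hab : a < b) (hbc : b < c) (hcd : c < d)
    (hz : z b = z c) (hA₁ : 0 < A ⟨(a, b), hab⟩) (hA₂ : 0 < A ⟨(c, d), hcd⟩) :
    HasDecreasingMove z A := by
  refine hasDecreasingMove_of_swap (E₁ := ⟨(a, b), hab⟩) (E₂ := ⟨(c, d), hcd⟩)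
    (F₁ := ⟨(a, c), hab.trans hbc⟩) (F₂ := ⟨(b, d), hbc.trans hcd⟩) ?_
    (Edge.key_lt_key.2 (.inl (hbc.trans hcd)))
    (Edge.key_lt_key.2 (.inl hbc)) (Edge.key_lt_key.2 (.inl (hbc.trans hcd)))
    (by simp [(hab.trans hbc).ne']) (by simp [hbc.ne']) hA₁ hA₂
  simp only [edgeExp, hz]
  abel

lemma phiBetaExp_pos_iff {X : Edge n →₀ ℕ} {i : Fin n ⊕ Fin k × Fin k} :
    0 < phiBetaExp z X i ↔ ∃ e, 0 < X e ∧ 0 < edgeExp z e i := by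
  simp [phiBetaExp_apply, Finset.sum_pos_iff, Nat.pos_iff_ne_zero]

lemma edgeExp_inl_pos_iff {e : Edge n} {m : Fin n} :
    0 < edgeExp z e (.inl m) ↔ e.1.1 = m ∨ e.1.2 = m := by
  rw [edgeExp_inl]
  split_ifs <;> simp_all

lemma edgeExp_inr_pos_iff {e : Edge n} {ij : Fin k × Fin k} :
    0 < edgeExp z e (.inr ij) ↔ (min (z e.1.1) (z e.1.2), max (z e.1.1) (z e.1.2)) = ij := by
  rw [edgeExp_inr]
  split_ifs <;> simp_all

lemma exists_right_edge {X Y : Edge n →₀ ℕ} (hXY : phiBetaExp z X = phiBetaExp z Y)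
    {a v : Fin n} (hav : a < v) (hY : 0 < Y ⟨(a, v), hav⟩) (hX₀ : X ⟨(a, v), hav⟩ = 0)
    (hX : ∀ e, 0 < X e → v ≤ e.1.2) : ∃ s, ∃ has : a < s, v < s ∧ 0 < X ⟨(a, s), has⟩ := by
  have hYa : 0 < phiBetaExp z Y (.inl a) :=
    phiBetaExp_pos_iff.2 ⟨_, hY, edgeExp_inl_pos_iff.2 (.inl rfl)⟩
  obtain ⟨⟨⟨b, s⟩, hbs⟩, hXe, he⟩ := phiBetaExp_pos_iff.1 (hXY ▸ hYa)
  rcases edgeExp_inl_pos_iff.1 he with rfl | rfl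
  · refine ⟨s, hbs, (hX _ hXe).lt_of_ne fun hvs => ?_, hXe⟩
    subst hvs
    exact hXe.ne' hX₀
  · exact ((hX _ hXe).trans_lt hav).false.elim

/-- The colour class `{z p, z v}` of the `B`-edge `{p, v}` forces an `A`-edge `{q, v}` with
`z q = z p`; comparing `q` with `p` then exhibits a nested pair in `A` or in `B`. -/
lemma false_of_back_edge (hz : Monotone z) (hAB : phiBetaExp z A = phiBetaExp z B)
    (hdisj : ∀ e, A e = 0 ∨ B e = 0) (hA : ¬ HasDecreasingMove z A)
    (hB : ¬ HasDecreasingMove z B) {u v : Fin n} (huv : u < v) (hE : 0 < A ⟨(u, v), huv⟩)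
    (hmin : ∀ e, 0 < A e ∨ 0 < B e → v < e.1.2 ∨ e.1.2 = v ∧ e.1.1 ≤ u)
    {p : Fin n} (hpu : p < u) (hBp : 0 < B ⟨(p, v), hpu.trans huv⟩) : False := by
  have hv : ∀ e, 0 < A e ∨ 0 < B e → v ≤ e.1.2 := fun e he =>
    (hmin e he).elim le_of_lt fun h => h.1.ge
  have hpv := hpu.trans huv
  have hAp : A ⟨(p, v), hpv⟩ = 0 := (hdisj _).resolve_right hBp.ne'
  obtain ⟨s, _, hvs, hAs⟩ := exists_right_edge hAB hpv hBp hAp fun e he => hv e (.inl he)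
  have hzpu : z p < z u := (hz hpu.le).lt_of_ne fun h =>
    hA (hasDecreasingMove_of_nested hpu huv hvs (.inl h) hAs hE)
  have hBc : 0 < phiBetaExp z B (.inr (z p, z v)) := phiBetaExp_pos_iff.2
    ⟨_, hBp, edgeExp_inr_pos_iff.2 (by simp [hz hpv.le])⟩
  obtain ⟨⟨⟨q, r⟩, hqr⟩, hAqr, hc⟩ := phiBetaExp_pos_iff.1 (hAB ▸ hBc)
  simp only [edgeExp_inr_pos_iff, min_eq_left (hz hqr.le), max_eq_right (hz hqr.le),
    Prod.mk.injEq] at hc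
  obtain ⟨hzq, hzr⟩ := hc
  have hqu : q < u := hz.reflect_lt (hzq ▸ hzpu)
  obtain rfl : r = v := by
    rcases hmin _ (.inl hAqr) with hvr | ⟨hrv, -⟩
    · exact (hA (hasDecreasingMove_of_nested hqu huv hvr (.inr hzr.symm) hAqr hE)).elim
    · exact hrv
  rcases lt_trichotomy q p with hqp | rfl | hpq
  · obtain ⟨t, _, hrt, hBt⟩ := exists_right_edge hAB.symm hqr hAqr
      ((hdisj _).resolve_left hAqr.ne') fun e he => hv e (.inr he)
    exact hB (hasDecreasingMove_of_nested hqp hpv hrt (.inl hzq) hBt hBp)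
  · exact hAqr.ne' hAp
  · exact hA (hasDecreasingMove_of_nested hpq hqr hvs (.inl hzq.symm) hAs hAqr)

lemma sum_phiBetaExp_apply {ι : Type*} (X : Edge n →₀ ℕ) (s : Finset ι)
    (g : ι → Fin n ⊕ Fin k × Fin k) :
    ∑ i ∈ s, phiBetaExp z X (g i) = ∑ e, X e * ∑ i ∈ s, edgeExp z e (g i) := by
  simp only [phiBetaExp_apply, Finset.mul_sum]
  exact Finset.sum_comm

lemma sum_edgeExp_inl (e : Edge n) (V : Finset (Fin n)) :
    ∑ m ∈ V, edgeExp z e (.inl m) =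
      (if e.1.1 ∈ V then 1 else 0) + (if e.1.2 ∈ V then 1 else 0) := by
  simp [edgeExp_inl, Finset.sum_add_distrib]

lemma sum_edgeExp_inr_of_monotone (hz : Monotone z) (e : Edge n) (c : Fin k) :
    ∑ l ∈ Finset.univ.filter (c ≤ ·), edgeExp z e (.inr (c, l)) =
      if z e.1.1 = c then 1 else 0 := by
  have hze := hz e.2.le
  simp only [edgeExp_inr, min_eq_left hze, max_eq_right hze, Prod.mk.injEq]
  by_cases hc : z e.1.1 = c
  · subst hc; simp [hze]
  · simp [hc]

lemma false_of_forall_lt_right (hz : Monotone z) (hAB : phiBetaExp z A = phiBetaExp z B)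
    (hA : ¬ HasDecreasingMove z A) {u v : Fin n} (huv : u < v) (hE : 0 < A ⟨(u, v), huv⟩)
    (hB : ∀ e, 0 < B e → v < e.1.2) : False := by
  -- `t` counts endpoints in `V` (a degree statistic) and `s` counts edges whose smaller endpoint
  -- has colour `z v` (a colour statistic), so both have equal totals on `A` and on `B`; but
  -- `s ≤ t` on the edges of `A`, strictly at `{u, v}`, while `t ≤ s` on the edges of `B`.
  set V : Finset (Fin n) := Finset.univ.filter fun m => z m = z v ∧ m ≤ v
  set t : Edge n → ℕ := fun e => (if e.1.1 ∈ V then 1 else 0) + (if e.1.2 ∈ V then 1 else 0)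
  set s : Edge n → ℕ := fun e => if z e.1.1 = z v then 1 else 0
  have hT : ∑ e, A e * t e = ∑ e, B e * t e := by
    simpa only [sum_phiBetaExp_apply, sum_edgeExp_inl] using
      congrArg (fun w => ∑ m ∈ V, w (.inl m)) hAB
  have hS : ∑ e, A e * s e = ∑ e, B e * s e := by
    simpa only [sum_phiBetaExp_apply, sum_edgeExp_inr_of_monotone hz] using
      congrArg (fun w => ∑ l ∈ Finset.univ.filter (z v ≤ ·), w (.inr (z v, l))) hAB
  have hAst : ∀ e, A e * s e ≤ A e * t e := by
    intro e
    rcases (A e).eq_zero_or_pos with h₀ | hAe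
    · simp [h₀]
    refine Nat.mul_le_mul_left _ ?_
    by_cases hc : z e.1.1 = z v
    · have hev : e.1.1 ≤ v := le_of_not_gt fun hve =>
        hA (hasDecreasingMove_of_separated huv hve e.2 hc.symm hE hAe)
      simp [s, t, V, hc, hev]
    · simp [s, hc]
  have hEst : A ⟨(u, v), huv⟩ * s ⟨(u, v), huv⟩ < A ⟨(u, v), huv⟩ * t ⟨(u, v), huv⟩ := by
    refine Nat.mul_lt_mul_of_pos_left ?_ hE
    by_cases hc : z u = z v <;> simp [s, t, V, hc, huv.le]
  have hBts : ∀ e, B e * t e ≤ B e * s e := by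
    intro e
    rcases (B e).eq_zero_or_pos with h₀ | hBe
    · simp [h₀]
    refine Nat.mul_le_mul_left _ ?_
    have h₂ : e.1.2 ∉ V := by simp [V, (hB e hBe).not_ge]
    have h₁ : e.1.1 ∈ V → z e.1.1 = z v := fun h => (Finset.mem_filter.1 h).2.1
    simp only [t, s, h₂, if_false, add_zero]
    split_ifs <;> simp_all
  have := Finset.sum_lt_sum (fun e _ => hAst e) ⟨_, Finset.mem_univ _, hEst⟩
  have := Finset.sum_le_sum fun e (_ : e ∈ Finset.univ) => hBts e
  omega

lemma false_of_minimal_edge (hz : Monotone z) (hAB : phiBetaExp z A = phiBetaExp z B)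
    (hdisj : ∀ e, A e = 0 ∨ B e = 0) (hA : ¬ HasDecreasingMove z A)
    (hB : ¬ HasDecreasingMove z B) (E : Edge n) (hE : 0 < A E)
    (hmin : ∀ e, 0 < A e ∨ 0 < B e → E.key ≤ e.key) : False := by
  obtain ⟨⟨u, v⟩, huv⟩ := E
  replace hmin : ∀ e, 0 < A e ∨ 0 < B e → v < e.1.2 ∨ e.1.2 = v ∧ e.1.1 ≤ u := fun e he => by
    simpa [Edge.key_le_key, eq_comm] using hmin e he
  by_cases hback : ∃ p, ∃ hpu : p < u, 0 < B ⟨(p, v), hpu.trans huv⟩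
  · obtain ⟨p, hpu, hBp⟩ := hback
    exact false_of_back_edge hz hAB hdisj hA hB huv hE hmin hpu hBp
  refine false_of_forall_lt_right hz hAB hA huv hE fun ⟨⟨p, w⟩, hpw⟩ hBe => ?_
  rcases hmin _ (.inr hBe) with h | ⟨rfl, hpu⟩
  · exact h
  rcases hpu.lt_or_eq with hpu | rfl
  · exact (hback ⟨p, hpu, hBe⟩).elim
  · exact (hE.ne' ((hdisj _).resolve_right hBe.ne')).elim

theorem eq_of_not_hasDecreasingMove (hz : Monotone z) (hAB : phiBetaExp z A = phiBetaExp z B)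
    (hA : ¬ HasDecreasingMove z A) (hB : ¬ HasDecreasingMove z B) : A = B := by
  induction A using WellFoundedLT.induction generalizing B with
  | _ A ih =>
  by_cases hcommon : ∃ e, 0 < A e ∧ 0 < B e
  · obtain ⟨e, hAe, hBe⟩ := hcommon
    have hsplit : ∀ X : Edge n →₀ ℕ, 0 < X e → X - Finsupp.single e 1 + Finsupp.single e 1 = X :=
      fun X hX => tsub_add_cancel_of_le (Finsupp.single_le_iff.2 hX)
    rw [← hsplit A hAe, ← hsplit B hBe] at hAB ⊢
    rw [map_add, map_add] at hAB
    have hlt : A - Finsupp.single e 1 < A := by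
      conv_rhs => rw [← hsplit A hAe]
      exact lt_add_of_pos_right _ (pos_iff_ne_zero.2 (Finsupp.single_ne_zero.2 one_ne_zero))
    rw [ih _ hlt (add_right_cancel hAB) (fun h => hA (h.mono tsub_le_self))
      (fun h => hB (h.mono tsub_le_self))]
  have hdisj : ∀ e, A e = 0 ∨ B e = 0 := fun e => by
    by_contra! h
    exact hcommon ⟨e, Nat.pos_of_ne_zero h.1, Nat.pos_of_ne_zero h.2⟩
  by_contra hne
  have hsupp : (A.support ∪ B.support).Nonempty := by
    rw [Finset.nonempty_iff_ne_empty, Ne, Finset.union_eq_empty, Finsupp.support_eq_empty,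
      Finsupp.support_eq_empty]
    rintro ⟨rfl, rfl⟩
    exact hne rfl
  obtain ⟨E, hE, hEmin⟩ := Finset.exists_min_image _ Edge.key hsupp
  have hmin : ∀ e, 0 < A e ∨ 0 < B e → E.key ≤ e.key := fun e he =>
    hEmin e (by simpa [Finset.mem_union, Nat.pos_iff_ne_zero] using he)
  rcases Finset.mem_union.1 hE with hE | hE
  · exact false_of_minimal_edge hz hAB hdisj hA hB E
      (Nat.pos_of_ne_zero (Finsupp.mem_support_iff.1 hE)) hmin
  · exact false_of_minimal_edge hz hAB.symm (fun e => (hdisj e).symm) hB hA E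
      (Nat.pos_of_ne_zero (Finsupp.mem_support_iff.1 hE)) fun e he => hmin e he.symm

theorem hasDecreasingMove_of_lt (hz : Monotone z) (hAB : phiBetaExp z A = phiBetaExp z B)
    (hlt : B ≺[edgeOrder n] A) : HasDecreasingMove z A := by
  by_contra hA
  obtain ⟨C, hC, hCmin⟩ := (InvImage.wf (edgeOrder n).toSyn wellFounded_lt).has_min
    {C | phiBetaExp z C = phiBetaExp z A} ⟨A, rfl⟩
  have hCA : C = A := eq_of_not_hasDecreasingMove hz hC (fun h =>
    let ⟨C', hC', hlt'⟩ := h.exists_lt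
    hCmin C' (hC'.trans hC) hlt') hA
  exact hCmin B hAB.symm (hCA ▸ hlt)

lemma exists_ne_phiBetaExp_eq {K : Type*} [Field K] {f : MvPolynomial (Edge n) K}
    (hf : f ∈ RingHom.ker (phiBeta K z).toRingHom) {A : Edge n →₀ ℕ} (hA : A ∈ f.support) :
    ∃ B ∈ f.support, B ≠ A ∧ phiBetaExp z B = phiBetaExp z A := by
  by_contra! h
  have h₀ : (phiBeta K z f).coeff (phiBetaExp z A) = 0 := by
    rw [show phiBeta K z f = 0 from hf, coeff_zero]
  rw [f.as_sum, map_sum] at h₀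
  simp only [phiBeta_monomial, coeff_sum, coeff_monomial] at h₀
  rw [Finset.sum_eq_single A (fun B hB hBA => if_neg (h B hB hBA)) (absurd hA), if_pos rfl] at h₀
  exact mem_support_iff.1 hA h₀

end

theorem exists_groebner_order_general (n : ℕ) (K : Type*) [Field K] :
    ∃ r : (Edge n →₀ ℕ) → (Edge n →₀ ℕ) → Prop,
      (∀ a b, r a b ∨ a = b ∨ r b a) ∧
      (∀ a b c, r a b → r b c → r a c) ∧
      (∀ a, ¬ r a a) ∧
      WellFounded r ∧
      (∀ a b δ, r a b → r (a + δ) (b + δ)) ∧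
      (∀ a, a ≠ 0 → r 0 a) ∧
      (∀ (k : ℕ), 0 < k → ∀ z : Fin n → Fin k, Monotone z →
        ∀ f : MvPolynomial (Edge n) K,
          f ∈ RingHom.ker (phiBeta K z).toRingHom → f ≠ 0 →
            ∃ γ ∈ MSet z, ∃ lγ lf : Edge n →₀ ℕ,
              IsLeading r (binom K γ) lγ ∧ IsLeading r f lf ∧ lγ ≤ lf) := by
  set m := edgeOrder n
  refine ⟨fun a b => a ≺[m] b, fun a b => ?_, fun _ _ _ => lt_trans, fun _ => lt_irrefl _,
    InvImage.wf _ wellFounded_lt, fun a b δ h => ?_, fun a ha => ?_, ?_⟩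
  · rcases lt_trichotomy (m.toSyn a) (m.toSyn b) with h | h | h
    · exact .inl h
    · exact .inr (.inl (m.toSyn.injective h))
    · exact .inr (.inr h)
  · simpa only [map_add] using add_lt_add_left h (m.toSyn δ)
  · simpa only [map_zero] using (m.zero_le _).lt_of_ne (m.toSyn.map_ne_zero_iff.2 ha).symm
  intro k _ z hz f hf hf₀
  have hA := m.degree_mem_support hf₀
  obtain ⟨B, hB, hBA, hψ⟩ := exists_ne_phiBetaExp_eq hf hA
  obtain ⟨γ, hγ, hle, hlt⟩ := hasDecreasingMove_of_lt hz hψ.symm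
    ((m.le_degree hB).lt_of_ne (m.toSyn.injective.ne hBA))
  exact ⟨γ, hγ, _, _, isLeading_binom K m hlt, isLeading_degree m hf₀, hle⟩

/-- There is a monomial order `≻` on `K[x_e : e ∈ P]` (depending only on
`n`) such that for every non-decreasing coloring `z`, the quadratic binomials of `M_{n,z}`
form a Gröbner basis of the toric ideal `I_{DC_{n,z}}` with respect to `≻`. Here the
strict order `r` (with `r a b` meaning `a ≺ b`) is total, transitive, irreflexive,
well-founded, translation-invariant, and has `0` as least element. -/
theorem exists_groebner_order (n : ℕ) (hn : 0 < n) (K : Type*) [Field K] :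
    ∃ r : (Edge n →₀ ℕ) → (Edge n →₀ ℕ) → Prop,
      (∀ a b, r a b ∨ a = b ∨ r b a) ∧
      (∀ a b c, r a b → r b c → r a c) ∧
      (∀ a, ¬ r a a) ∧
      WellFounded r ∧
      (∀ a b δ, r a b → r (a + δ) (b + δ)) ∧
      (∀ a, a ≠ 0 → r 0 a) ∧
      (∀ (k : ℕ), 0 < k → ∀ z : Fin n → Fin k, Monotone z →
        ∀ f : MvPolynomial (Edge n) K,
          f ∈ RingHom.ker (phiBeta K z).toRingHom → f ≠ 0 →
            ∃ γ ∈ MSet z, ∃ lγ lf : Edge n →₀ ℕ,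
              IsLeading r (binom K γ) lγ ∧ IsLeading r f lf ∧ lγ ≤ lf) :=
  exists_groebner_order_general n K
end

section
/- Let n ≥ 4. For all 1 ≤ a < b < c < d ≤ n, the following strict inequalities between weights hold: weight({a,b}) + weight({c,d}) > weight({a,c}) + weight({b,d}), and weight({a,d}) + weight({b,c}) > weight({a,c}) + weight({b,d}). In other words, each of the two non-crossing perfect matchings on four points of a circle has strictly larger total weight than the crossing matching on the same four points; consequently, for the weight-refining monomial order, the leading monomial of x_{ab}x_{cd} − x_{ac}x_{bd} is x_{ab}x_{cd}, and that of x_{ad}x_{bc} − x_{ac}x_{bd} is x_{ad}x_{bc}. -/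
open Finset

/-- Two chords `{a,b}` and `{a',b'}` (with `a < b`, `a' < b'`) of the circle cross. -/
def Crossing {n : ℕ} (a b a' b' : Fin n) : Prop :=
  (a < a' ∧ a' < b ∧ b < b') ∨ (a' < a ∧ a < b' ∧ b' < b)

/-- The unordered pairs `{a,b}` and `{a',b'}` are disjoint and do not cross. -/
def NonIntersecting {n : ℕ} (a b a' b' : Fin n) : Prop :=
  a ≠ a' ∧ a ≠ b' ∧ b ≠ a' ∧ b ≠ b' ∧
    ¬ Crossing (min a b) (max a b) (min a' b') (max a' b')

open scoped Classical in
/-- The weight of `e ∈ P`: the number of `e' ∈ P` disjoint from `e` that do not cross `e`. -/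
noncomputable def weight {n : ℕ} (e : Edge n) : ℕ :=
  (Finset.univ.filter fun e' : Edge n =>
    (e'.1.1 ≠ e.1.1 ∧ e'.1.1 ≠ e.1.2 ∧ e'.1.2 ≠ e.1.1 ∧ e'.1.2 ≠ e.1.2) ∧
      ¬ Crossing e.1.1 e.1.2 e'.1.1 e'.1.2).card

/-- The weight of a monomial: the sum of the weights of its variables, with multiplicity. -/
noncomputable def weightM {n : ℕ} (α : Edge n →₀ ℕ) : ℕ :=
  ∑ e : Edge n, α e * weight e

/-! A chord `{a, b}` with gap `k = b - a` splits the other `n - 2` points into `k - 1` points on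
one side and `n - k - 1` on the other, and a disjoint chord avoids crossing it exactly when both
its endpoints lie on the same side. Hence its weight is `C(k-1, 2) + C(n-k-1, 2)`, which equals
`C(n-1, 2) + 1 - k (n - k)`. With the gaps `x, y, z, w` between consecutive points of
`a < b < c < d` around the circle, the two inequalities become
`x (y+z+w) + z (x+y+w) < (x+y)(z+w) + (y+z)(x+w)` and
`(x+y+z) w + y (x+z+w) < (x+y)(z+w) + (y+z)(x+w)`, whose differences are `2yw` and `2xz`. -/

theorem Nat.choose_two_add_choose_two_add_succ_mul_succ (j m : ℕ) :
    j.choose 2 + m.choose 2 + (j + 1) * (m + 1) = (j + m + 1).choose 2 + 1 := by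
  have key : ((j.choose 2 + m.choose 2 + (j + 1) * (m + 1) : ℕ) : ℚ) =
      ((j + m + 1).choose 2 + 1 : ℕ) := by
    push_cast [Nat.cast_choose_two]
    ring
  exact_mod_cast key

section

open MvPolynomial

variable {n : ℕ}

open scoped Classical in
theorem weight_eq_card_filter (e : Edge n) :
    weight e = #{p : Fin n × Fin n |
      ((p.1 ≠ e.1.1 ∧ p.1 ≠ e.1.2 ∧ p.2 ≠ e.1.1 ∧ p.2 ≠ e.1.2) ∧
        ¬ Crossing e.1.1 e.1.2 p.1 p.2) ∧ p.1 < p.2} := by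
  rw [weight, ← card_map (Function.Embedding.subtype _)]
  congr 1
  ext p
  simp

theorem weight_eq_choose_two_add_choose_two {a b : Fin n} (h : a < b) :
    weight (⟨(a, b), h⟩ : Edge n) = (#(Ioo a b)).choose 2 + (#(Icc a b)ᶜ).choose 2 := by
  classical
  rw [weight_eq_card_filter, ← card_product_filter_lt, ← card_product_filter_lt,
    ← card_union_of_disjoint]
  · congr 1
    ext p
    simp only [mem_filter, mem_univ, true_and, mem_union, mem_product, mem_Ioo, mem_compl,
      mem_Icc, Crossing, not_and_or, Fin.lt_def, Fin.le_def, ne_eq, Fin.ext_iff]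
    omega
  · simp only [disjoint_left, mem_filter, mem_product, mem_Ioo, mem_compl, mem_Icc]
    grind

theorem weight_add_mul_eq {a b : Fin n} (h : a < b) {k l : ℕ} (hk : (a : ℕ) + k = b)
    (hl : k + l = n) : weight (⟨(a, b), h⟩ : Edge n) + k * l = (n - 1).choose 2 + 1 := by
  obtain ⟨j, rfl⟩ : ∃ j, k = j + 1 := Nat.exists_eq_add_one.2 (by omega)
  obtain ⟨m, rfl⟩ : ∃ m, l = m + 1 := Nat.exists_eq_add_one.2 (by omega)
  have hin : #(Ioo a b) = j := by rw [Fin.card_Ioo]; omega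
  have hout : #(Icc a b)ᶜ = m := by rw [card_compl, Fin.card_Icc, Fintype.card_fin]; omega
  rw [weight_eq_choose_two_add_choose_two, hin, hout,
    Nat.choose_two_add_choose_two_add_succ_mul_succ]
  congr 2
  omega

theorem weight_crossing_lt_weight_noncrossing {a b c d : Fin n} (hab : a < b) (hbc : b < c)
    (hcd : c < d) :
    weight (⟨(a, c), hab.trans hbc⟩ : Edge n) + weight (⟨(b, d), hbc.trans hcd⟩ : Edge n) <
        weight (⟨(a, b), hab⟩ : Edge n) + weight (⟨(c, d), hcd⟩ : Edge n) ∧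
      weight (⟨(a, c), hab.trans hbc⟩ : Edge n) + weight (⟨(b, d), hbc.trans hcd⟩ : Edge n) <
        weight (⟨(a, d), (hab.trans hbc).trans hcd⟩ : Edge n) +
          weight (⟨(b, c), hbc⟩ : Edge n) := by
  have hab' : (a : ℕ) < b := hab
  have hbc' : (b : ℕ) < c := hbc
  have hcd' : (c : ℕ) < d := hcd
  have hdn : (d : ℕ) < n := d.isLt
  set x := (b : ℕ) - a
  set y := (c : ℕ) - b
  set z := (d : ℕ) - c
  set w := n - d + a
  have wab := weight_add_mul_eq hab (k := x) (l := y + z + w) (by omega) (by omega)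
  have wcd := weight_add_mul_eq hcd (k := z) (l := x + y + w) (by omega) (by omega)
  have wac := weight_add_mul_eq (hab.trans hbc) (k := x + y) (l := z + w)
    (by omega) (by omega)
  have wbd := weight_add_mul_eq (hbc.trans hcd) (k := y + z) (l := x + w)
    (by omega) (by omega)
  have wad := weight_add_mul_eq ((hab.trans hbc).trans hcd) (k := x + y + z) (l := w)
    (by omega) (by omega)
  have wbc := weight_add_mul_eq hbc (k := y) (l := x + z + w) (by omega) (by omega)
  have hparallel :
      x * (y + z + w) + z * (x + y + w) < (x + y) * (z + w) + (y + z) * (x + w) := by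
    nlinarith [Nat.mul_pos (show 0 < y by omega) (show 0 < w by omega)]
  have hnested :
      (x + y + z) * w + y * (x + z + w) < (x + y) * (z + w) + (y + z) * (x + w) := by
    nlinarith [Nat.mul_pos (show 0 < x by omega) (show 0 < z by omega)]
  constructor <;> omega

theorem weightM_single_add_single (u v : Edge n) :
    weightM (Finsupp.single u 1 + Finsupp.single v 1) = weight u + weight v := by
  simp [weightM, Finsupp.single_apply, add_mul, sum_add_distrib]

theorem isLeading_monomial_sub_monomial {K : Type*} [CommRing K] [Nontrivial K]
    {r : (Edge n →₀ ℕ) → (Edge n →₀ ℕ) → Prop} {α β : Edge n →₀ ℕ} (hne : β ≠ α)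
    (hr : r β α) : IsLeading r (monomial α (1 : K) - monomial β 1) α := by
  refine ⟨?_, fun γ hγ hγα => ?_⟩
  · simp [mem_support_iff, coeff_monomial, hne]
  · obtain rfl : γ = β := by
      by_contra hγβ
      simp [mem_support_iff, coeff_monomial, Ne.symm hγα, Ne.symm hγβ] at hγ
    exact hr

theorem isLeading_X_mul_X_sub_X_mul_X {K : Type*} [CommRing K] [Nontrivial K]
    {r : (Edge n →₀ ℕ) → (Edge n →₀ ℕ) → Prop}
    (hr : ∀ α β : Edge n →₀ ℕ, weightM α < weightM β → r α β) {u v u' v' : Edge n}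
    (h : weight u' + weight v' < weight u + weight v) :
    IsLeading r (X u * X v - X u' * X v' : MvPolynomial (Edge n) K)
      (Finsupp.single u 1 + Finsupp.single v 1) := by
  have hlt : weightM (Finsupp.single u' 1 + Finsupp.single v' 1) <
      weightM (Finsupp.single u 1 + Finsupp.single v 1) := by
    rwa [weightM_single_add_single, weightM_single_add_single]
  simp only [X, monomial_mul, mul_one]
  exact isLeading_monomial_sub_monomial (ne_of_apply_ne weightM hlt.ne) (hr _ _ hlt)

end

theorem weight_of_noncrossing_gt_crossing_general (n : ℕ) (K : Type*) [Field K]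
    (a b c d : Fin n) (hab : a < b) (hbc : b < c) (hcd : c < d) :
    weight (⟨(a, b), hab⟩ : Edge n) + weight (⟨(c, d), hcd⟩ : Edge n) >
      weight (⟨(a, c), hab.trans hbc⟩ : Edge n) +
        weight (⟨(b, d), hbc.trans hcd⟩ : Edge n) ∧
    weight (⟨(a, d), (hab.trans hbc).trans hcd⟩ : Edge n) +
        weight (⟨(b, c), hbc⟩ : Edge n) >
      weight (⟨(a, c), hab.trans hbc⟩ : Edge n) +
        weight (⟨(b, d), hbc.trans hcd⟩ : Edge n) ∧
    (∀ r : (Edge n →₀ ℕ) → (Edge n →₀ ℕ) → Prop,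
      (∀ α β : Edge n →₀ ℕ, weightM α < weightM β → r α β) →
      IsLeading r
        (MvPolynomial.X (⟨(a, b), hab⟩ : Edge n) *
            MvPolynomial.X (⟨(c, d), hcd⟩ : Edge n) -
          MvPolynomial.X (⟨(a, c), hab.trans hbc⟩ : Edge n) *
            MvPolynomial.X (⟨(b, d), hbc.trans hcd⟩ : Edge n) : MvPolynomial (Edge n) K)
        (Finsupp.single (⟨(a, b), hab⟩ : Edge n) 1 +
          Finsupp.single (⟨(c, d), hcd⟩ : Edge n) 1) ∧
      IsLeading r
        (MvPolynomial.X (⟨(a, d), (hab.trans hbc).trans hcd⟩ : Edge n) *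
            MvPolynomial.X (⟨(b, c), hbc⟩ : Edge n) -
          MvPolynomial.X (⟨(a, c), hab.trans hbc⟩ : Edge n) *
            MvPolynomial.X (⟨(b, d), hbc.trans hcd⟩ : Edge n) : MvPolynomial (Edge n) K)
        (Finsupp.single (⟨(a, d), (hab.trans hbc).trans hcd⟩ : Edge n) 1 +
          Finsupp.single (⟨(b, c), hbc⟩ : Edge n) 1)) := by
  obtain ⟨hparallel, hnested⟩ := weight_crossing_lt_weight_noncrossing hab hbc hcd
  exact ⟨hparallel, hnested, fun r hr =>
    ⟨isLeading_X_mul_X_sub_X_mul_X hr hparallel, isLeading_X_mul_X_sub_X_mul_X hr hnested⟩⟩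

/-- For `1 ≤ a < b < c < d ≤ n`, each of the two non-crossing perfect
matchings on `{a,b,c,d}` has strictly larger total weight than the crossing matching;
consequently, for any order refining the weights, the leading monomial of
`x_{ab}x_{cd} − x_{ac}x_{bd}` is `x_{ab}x_{cd}` and that of `x_{ad}x_{bc} − x_{ac}x_{bd}`
is `x_{ad}x_{bc}`. -/
theorem weight_of_noncrossing_gt_crossing (n : ℕ) (hn : 4 ≤ n) (K : Type*) [Field K]
    (a b c d : Fin n) (hab : a < b) (hbc : b < c) (hcd : c < d) :
    weight (⟨(a, b), hab⟩ : Edge n) + weight (⟨(c, d), hcd⟩ : Edge n) >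
      weight (⟨(a, c), hab.trans hbc⟩ : Edge n) +
        weight (⟨(b, d), hbc.trans hcd⟩ : Edge n) ∧
    weight (⟨(a, d), (hab.trans hbc).trans hcd⟩ : Edge n) +
        weight (⟨(b, c), hbc⟩ : Edge n) >
      weight (⟨(a, c), hab.trans hbc⟩ : Edge n) +
        weight (⟨(b, d), hbc.trans hcd⟩ : Edge n) ∧
    (∀ r : (Edge n →₀ ℕ) → (Edge n →₀ ℕ) → Prop,
      (∀ α β : Edge n →₀ ℕ, weightM α < weightM β → r α β) →
      IsLeading r
        (MvPolynomial.X (⟨(a, b), hab⟩ : Edge n) *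
            MvPolynomial.X (⟨(c, d), hcd⟩ : Edge n) -
          MvPolynomial.X (⟨(a, c), hab.trans hbc⟩ : Edge n) *
            MvPolynomial.X (⟨(b, d), hbc.trans hcd⟩ : Edge n) : MvPolynomial (Edge n) K)
        (Finsupp.single (⟨(a, b), hab⟩ : Edge n) 1 +
          Finsupp.single (⟨(c, d), hcd⟩ : Edge n) 1) ∧
      IsLeading r
        (MvPolynomial.X (⟨(a, d), (hab.trans hbc).trans hcd⟩ : Edge n) *
            MvPolynomial.X (⟨(b, c), hbc⟩ : Edge n) -
          MvPolynomial.X (⟨(a, c), hab.trans hbc⟩ : Edge n) *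
            MvPolynomial.X (⟨(b, d), hbc.trans hcd⟩ : Edge n) : MvPolynomial (Edge n) K)
        (Finsupp.single (⟨(a, d), (hab.trans hbc).trans hcd⟩ : Edge n) 1 +
          Finsupp.single (⟨(b, c), hbc⟩ : Edge n) 1)) :=
  weight_of_noncrossing_gt_crossing_general n K a b c d hab hbc hcd
end
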